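/- arXiv:2507.01789 — 2 statements merged into one kernel-verified Lean document; each statement's English description precedes it below -/
import Mathlib

section
/- The null space of T_ν is nontrivial for ν = π/2: the nonzero function μ(y) = cos(4πy) satisfies ∫₀¹ cos²(π|x−y|) cos(4πy) dy = 0 for every x ∈ [0,1], so T_{π/2} μ = 0. -/
open MeasureTheory

lemma cos_interval_integral (a b : ℝ) (hb : b ≠ 0) :
    ∫ y in (0:ℝ)..1, Real.cos (a + b * y) = (Real.sin (a + b) - Real.sin a) / b := by
  have h : ∀ y ∈ Set.uIcc (0:ℝ) 1, HasDerivAt (fun y => Real.sin (a + b * y) / b)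
      (Real.cos (a + b * y)) y := by
    intro y _
    have h1 : HasDerivAt (fun y : ℝ => a + b * y) b y := by
      simpa using ((hasDerivAt_id y).const_mul b).const_add a
    have h2 := ((Real.hasDerivAt_sin (a + b * y)).comp y h1).div_const b
    have : Real.cos (a + b * y) * b / b = Real.cos (a + b * y) := by
      field_simp
    rwa [this] at h2
  have hint : IntervalIntegrable (fun y => Real.cos (a + b * y)) volume 0 1 := by
    exact ((Real.continuous_cos.comp (continuous_const.add (continuous_const.mul continuous_id)))).intervalIntegrable 0 1
  have := intervalIntegral.integral_eq_sub_of_hasDerivAt h hint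
  rw [this]
  ring_nf

/-- The null space of `T_{π/2}` is nontrivial: the nonzero function
`μ(y) = cos(4πy)` satisfies `∫₀¹ cos²(π|x−y|) cos(4πy) dy = 0` for every `x ∈ [0,1]`. -/
theorem nontrivial_null_space :
    ¬ (∀ᵐ y ∂(volume.restrict (Set.Icc (0:ℝ) 1)), Real.cos (4 * Real.pi * y) = 0) ∧
    ∀ x ∈ Set.Icc (0:ℝ) 1,
      ∫ y in Set.Icc (0:ℝ) 1,
        (Real.cos (Real.pi * |x - y|))^2 * Real.cos (4 * Real.pi * y) = 0 := by
  constructor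
  · intro h
    rw [ae_restrict_iff' measurableSet_Icc] at h
    have h0 : volume {y : ℝ | ¬ (y ∈ Set.Icc (0:ℝ) 1 →
        Real.cos (4 * Real.pi * y) = 0)} = 0 := h
    have hsub : Set.Ioo (0:ℝ) (1/8) ⊆ {y : ℝ | ¬ (y ∈ Set.Icc (0:ℝ) 1 →
        Real.cos (4 * Real.pi * y) = 0)} := by
      intro y hy
      simp only [Set.mem_setOf_eq]
      have hpi := Real.pi_pos
      have hmem : y ∈ Set.Icc (0:ℝ) 1 := ⟨hy.1.le, by linarith [hy.2]⟩
      have hpos : 0 < Real.cos (4 * Real.pi * y) := by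
        apply Real.cos_pos_of_mem_Ioo
        constructor
        · nlinarith [hy.1]
        · nlinarith [hy.2, hy.1]
      exact fun hc => (ne_of_gt hpos) (hc hmem)
    have hm := measure_mono (μ := (volume : Measure ℝ)) hsub
    rw [h0] at hm
    rw [Real.volume_Ioo] at hm
    simp only [nonpos_iff_eq_zero, ENNReal.ofReal_eq_zero] at hm
    norm_num at hm
  · intro x hx
    rw [MeasureTheory.integral_Icc_eq_integral_Ioc,
        ← intervalIntegral.integral_of_le (by norm_num : (0:ℝ) ≤ 1)]
    have heq : ∀ y : ℝ, (Real.cos (Real.pi * |x - y|))^2 * Real.cos (4 * Real.pi * y)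
        = (1/2) * Real.cos (0 + 4 * Real.pi * y)
          + (1/4) * Real.cos (2 * Real.pi * x + 2 * Real.pi * y)
          + (1/4) * Real.cos (2 * Real.pi * x + (-(6 * Real.pi)) * y) := by
      intro y
      have h1 : Real.pi * |x - y| = |Real.pi * (x - y)| := by
        rw [abs_mul, abs_of_nonneg Real.pi_pos.le]
      rw [h1, Real.cos_abs, Real.cos_sq]
      have ha : (2:ℝ) * (Real.pi * (x - y)) = 2*Real.pi*x - 2*Real.pi*y := by ring
      have hb : (4:ℝ) * Real.pi * y = 2 * (2*Real.pi*y) := by ring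
      have hc : 2*Real.pi*x + (-(6*Real.pi))*y = 2*Real.pi*x - 3*(2*Real.pi*y) := by ring
      rw [ha, hb, hc, zero_add, Real.cos_sub, Real.cos_add, Real.cos_two_mul,
        Real.cos_sub, Real.cos_three_mul, Real.sin_three_mul]
      linear_combination (Real.sin (2*Real.pi*x) * Real.sin (2*Real.pi*y)) *
        (Real.sin_sq_add_cos_sq (2*Real.pi*y))
    rw [intervalIntegral.integral_congr (fun y _ => heq y)]
    have hpi := Real.pi_pos
    have i1 : IntervalIntegrable (fun y => (1/2 : ℝ) * Real.cos (0 + 4 * Real.pi * y))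
        volume 0 1 := (continuous_const.mul ((Real.continuous_cos.comp (continuous_const.add
          (continuous_const.mul continuous_id))))).intervalIntegrable 0 1
    have i2 : IntervalIntegrable
        (fun y => (1/4 : ℝ) * Real.cos (2 * Real.pi * x + 2 * Real.pi * y))
        volume 0 1 := (continuous_const.mul ((Real.continuous_cos.comp (continuous_const.add
          (continuous_const.mul continuous_id))))).intervalIntegrable 0 1
    have i3 : IntervalIntegrable
        (fun y => (1/4 : ℝ) * Real.cos (2 * Real.pi * x + (-(6 * Real.pi)) * y))
        volume 0 1 := (continuous_const.mul ((Real.continuous_cos.comp (continuous_const.add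
          (continuous_const.mul continuous_id))))).intervalIntegrable 0 1
    rw [intervalIntegral.integral_add (i1.add i2) i3, intervalIntegral.integral_add i1 i2,
      intervalIntegral.integral_const_mul, intervalIntegral.integral_const_mul,
      intervalIntegral.integral_const_mul,
      cos_interval_integral 0 (4*Real.pi) (by positivity),
      cos_interval_integral _ (2*Real.pi) (by positivity),
      cos_interval_integral _ (-(6*Real.pi)) (by simp [Real.pi_ne_zero])]
    have s1 : Real.sin (0 + 4*Real.pi) = Real.sin 0 := by
      have : (0:ℝ) + 4*Real.pi = 0 + (2:ℤ)*(2*Real.pi) := by push_cast; ring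
      rw [this, Real.sin_add_int_mul_two_pi]
    have s2 : Real.sin (2*Real.pi*x + 2*Real.pi) = Real.sin (2*Real.pi*x) := by
      have : 2*Real.pi*x + 2*Real.pi = 2*Real.pi*x + (1:ℤ)*(2*Real.pi) := by push_cast; ring
      rw [this, Real.sin_add_int_mul_two_pi]
    have s3 : Real.sin (2*Real.pi*x + -(6*Real.pi)) = Real.sin (2*Real.pi*x) := by
      have : 2*Real.pi*x + -(6*Real.pi) = 2*Real.pi*x + (-3:ℤ)*(2*Real.pi) := by
        push_cast; ring
      rw [this, Real.sin_add_int_mul_two_pi]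
    rw [s1, s2, s3]
    ring
end

section
/- Uniqueness with dense frequencies: let {ν_k}_{k=1}^∞ ⊂ (0,∞) be a sequence of frequencies such that {4ν_k : k ∈ ℕ} is dense in [0,∞). If μ ∈ L²([0,1]) satisfies T_{ν_k} μ = 0 for all k, i.e. ∫₀¹ cos²(2ν_k|x−y|) μ(y) dy = 0 for all x ∈ [0,1] and all k, then μ = 0 almost everywhere on [0,1]. -/
/-!
Since `cos² θ = (1 + cos 2θ) / 2`, the hypothesis says `∫ μ + ∫ cos (4ν_k (x - y)) μ(y) dy = 0`.
The left side is continuous and even in the frequency, so it vanishes for every frequency `t`;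
`t = 0` forces `∫ μ = 0`. Hence `∫ cos (t (x - y)) μ(y) dy = 0` for all `t` and `x ∈ [0, 1]`, and
expanding `cos (t (x - y))` shows that all cosine and sine transforms of `μ` on `[0, 1]` vanish.
In particular every Fourier coefficient of `μ` on `[0, 1]` is zero, so `μ = 0` a.e. by Parseval.
-/

open MeasureTheory Set Real

section

variable {ρ : Measure ℝ} {f : ℝ → ℝ}

lemma Real.cos_mul_abs (c z : ℝ) : cos (c * |z|) = cos (c * z) := by
  rcases abs_choice z with h | h <;> simp [h]

lemma MeasureTheory.Integrable.cos_mul (hf : Integrable f ρ) {g : ℝ → ℝ} (hg : Continuous g) :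
    Integrable (fun y => cos (g y) * f y) ρ :=
  hf.bdd_mul (c := 1) (by fun_prop : Continuous _).aestronglyMeasurable
    (ae_of_all _ fun y => by simpa using abs_cos_le_one (g y))

lemma MeasureTheory.Integrable.sin_mul (hf : Integrable f ρ) {g : ℝ → ℝ} (hg : Continuous g) :
    Integrable (fun y => sin (g y) * f y) ρ :=
  hf.bdd_mul (c := 1) (by fun_prop : Continuous _).aestronglyMeasurable
    (ae_of_all _ fun y => by simpa using abs_sin_le_one (g y))

lemma continuous_integral_cos_mul_sub (hf : Integrable f ρ) (x : ℝ) :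
    Continuous fun t => ∫ y, cos (t * (x - y)) * f y ∂ρ := by
  refine continuous_of_dominated (bound := fun y => |f y|)
    (fun t => (hf.cos_mul (by fun_prop)).aestronglyMeasurable) (fun t => ae_of_all _ fun y => ?_)
    hf.abs (ae_of_all _ fun y => by fun_prop)
  rw [norm_mul, norm_eq_abs, norm_eq_abs]
  exact mul_le_of_le_one_left (abs_nonneg _) (abs_cos_le_one _)

lemma integral_cos_sq_mul_abs_sub (hf : Integrable f ρ) (c x : ℝ) :
    ∫ y, cos (c * |x - y|) ^ 2 * f y ∂ρ
      = (∫ y, f y ∂ρ + ∫ y, cos (2 * c * (x - y)) * f y ∂ρ) / 2 := by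
  have hpt : ∀ y, cos (c * |x - y|) ^ 2 * f y = (f y + cos (2 * c * (x - y)) * f y) / 2 := by
    intro y
    rw [cos_sq, ← mul_assoc, cos_mul_abs]
    ring
  simp_rw [hpt]
  rw [integral_div, integral_add hf (hf.cos_mul (by fun_prop))]

lemma integral_cos_mul_sub (hf : Integrable f ρ) (t x : ℝ) :
    ∫ y, cos (t * (x - y)) * f y ∂ρ
      = cos (t * x) * ∫ y, cos (t * y) * f y ∂ρ + sin (t * x) * ∫ y, sin (t * y) * f y ∂ρ := by
  simp_rw [mul_sub, cos_sub, add_mul, mul_assoc]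
  rw [integral_add ((hf.cos_mul (by fun_prop)).const_mul _) ((hf.sin_mul (by fun_prop)).const_mul _),
    integral_const_mul, integral_const_mul]

lemma integral_cos_mul_sub_eq_zero_of_dense {S : Set ℝ} (hS : ∀ t, 0 ≤ t → t ∈ closure S)
    (hf : Integrable f ρ) (x : ℝ)
    (H : ∀ s ∈ S, ∫ y, f y ∂ρ + ∫ y, cos (s * (x - y)) * f y ∂ρ = 0) (t : ℝ) :
    ∫ y, cos (t * (x - y)) * f y ∂ρ = 0 := by
  have hclosed : IsClosed {s | ∫ y, f y ∂ρ + ∫ y, cos (s * (x - y)) * f y ∂ρ = 0} :=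
    isClosed_eq (continuous_const.add (continuous_integral_cos_mul_sub hf x)) continuous_const
  have hnonneg : ∀ s, 0 ≤ s → ∫ y, f y ∂ρ + ∫ y, cos (s * (x - y)) * f y ∂ρ = 0 :=
    fun s hs => closure_minimal H hclosed (hS s hs)
  have hzero : ∫ y, f y ∂ρ = 0 := by simpa [← two_mul] using hnonneg 0 le_rfl
  have heven : ∫ y, cos (t * (x - y)) * f y ∂ρ = ∫ y, cos (|t| * (x - y)) * f y ∂ρ := by
    rcases abs_choice t with h | h <;> simp [h, neg_mul]
  simpa [hzero, heven] using hnonneg |t| (abs_nonneg t)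

lemma integral_sin_mul_eq_zero_of_integral_cos_mul_sub (hf : Integrable f ρ) {t : ℝ}
    (h : ∀ x ∈ Icc (0 : ℝ) 1, ∫ y, cos (t * (x - y)) * f y ∂ρ = 0) :
    ∫ y, sin (t * y) * f y ∂ρ = 0 := by
  rcases eq_or_ne t 0 with rfl | ht
  · simp
  have hcos : ∫ y, cos (t * y) * f y ∂ρ = 0 := by simpa using h 0 ⟨le_rfl, zero_le_one⟩
  set x := 1 / (1 + |t|)
  have hx : x ∈ Icc (0 : ℝ) 1 :=
    ⟨by positivity, (div_le_one (by positivity)).mpr (by linarith [abs_nonneg t])⟩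
  have hsmall : |t * x| < 1 := by
    rw [abs_mul, abs_of_nonneg hx.1, mul_one_div, div_lt_one (by positivity)]
    linarith
  have hsin : sin (t * x) ≠ 0 := by
    obtain ⟨hlow, hhigh⟩ := abs_lt.mp hsmall
    rw [Ne, sin_eq_zero_iff_of_lt_of_lt (by linarith [pi_gt_three]) (by linarith [pi_gt_three])]
    exact mul_ne_zero ht (by positivity)
  have := h x hx
  rw [integral_cos_mul_sub hf, hcos, mul_zero, zero_add] at this
  exact (mul_eq_zero.mp this).resolve_left hsin

lemma integral_cexp_mul_I_mul_ofReal (hf : Integrable f ρ) (t : ℝ) :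
    ∫ y, Complex.exp (↑(t * y) * Complex.I) * f y ∂ρ
      = ↑(∫ y, cos (t * y) * f y ∂ρ) + ↑(∫ y, sin (t * y) * f y ∂ρ) * Complex.I := by
  simp_rw [Complex.exp_mul_I, ← Complex.ofReal_cos, ← Complex.ofReal_sin, add_mul,
    mul_right_comm _ Complex.I, ← Complex.ofReal_mul]
  rw [integral_add (hf.cos_mul (by fun_prop)).ofReal ((hf.sin_mul (by fun_prop)).ofReal.mul_const _),
    integral_mul_const, integral_complex_ofReal, integral_complex_ofReal]

end

lemma MeasureTheory.MemLp.ae_eq_zero_of_fourierCoeffOn_eq_zero {a b : ℝ} (hab : a < b) {f : ℝ → ℂ}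
    (hf : MemLp f 2 (volume.restrict (Ioc a b))) (h : ∀ n, fourierCoeffOn hab f n = 0) :
    f =ᵐ[volume.restrict (Ioc a b)] 0 := by
  have hparseval := hasSum_sq_fourierCoeffOn hab hf
  simp only [h, norm_zero, zero_pow two_ne_zero] at hparseval
  have hnorm : ∫ x in Ioc a b, ‖f x‖ ^ 2 = 0 := by
    rw [← intervalIntegral.integral_of_le hab.le]
    have h0 := (hasSum_zero.unique hparseval).symm
    rw [smul_eq_zero] at h0
    exact h0.resolve_left (inv_ne_zero (sub_ne_zero.mpr hab.ne'))
  filter_upwards [(integral_eq_zero_iff_of_nonneg (fun x => by positivity)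
    (hf.integrable_norm_pow two_ne_zero)).mp hnorm] with x hx
  simpa using hx

lemma ae_eq_zero_of_integral_cos_sin_mul_eq_zero {a b : ℝ} (hab : a < b) {f : ℝ → ℝ}
    (hf : MemLp f 2 (volume.restrict (Ioc a b)))
    (hcos : ∀ t, ∫ y in Ioc a b, cos (t * y) * f y = 0)
    (hsin : ∀ t, ∫ y in Ioc a b, sin (t * y) * f y = 0) :
    f =ᵐ[volume.restrict (Ioc a b)] 0 := by
  have hcoeff : ∀ n : ℤ, fourierCoeffOn hab (fun y => (f y : ℂ)) n = 0 := by
    intro n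
    have hexp : ∀ x : ℝ, fourier (-n) (x : AddCircle (b - a)) • (f x : ℂ)
        = Complex.exp (↑(2 * π * (-n) / (b - a) * x) * Complex.I) * f x := by
      intro x
      rw [fourier_coe_apply, smul_eq_mul]
      congr 2
      push_cast
      ring
    rw [fourierCoeffOn_eq_integral, intervalIntegral.integral_of_le hab.le]
    simp_rw [hexp]
    rw [integral_cexp_mul_I_mul_ofReal (hf.integrable one_le_two), hcos, hsin]
    simp
  filter_upwards [hf.ofReal.ae_eq_zero_of_fourierCoeffOn_eq_zero hab hcoeff] with x hx
  simpa using hx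

theorem uniqueness_with_dense_frequencies_general (ν : ℕ → ℝ)
    (hdense : ∀ x : ℝ, 0 ≤ x → x ∈ closure (Set.range fun k : ℕ => 4 * ν k))
    (μ : ℝ → ℝ) (hμ : MemLp μ 2 (volume.restrict (Set.Icc (0:ℝ) 1)))
    (h0 : ∀ k : ℕ, ∀ x ∈ Set.Icc (0:ℝ) 1,
      ∫ y in Set.Icc (0:ℝ) 1, (Real.cos (2 * ν k * |x - y|))^2 * μ y = 0) :
    ∀ᵐ y ∂(volume.restrict (Set.Icc (0:ℝ) 1)), μ y = 0 := by
  have hIcc : volume.restrict (Icc (0 : ℝ) 1) = volume.restrict (Ioc 0 1) :=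
    (Measure.restrict_congr_set Ioc_ae_eq_Icc).symm
  rw [hIcc] at hμ h0 ⊢
  have hint : Integrable μ (volume.restrict (Ioc 0 1)) := hμ.integrable one_le_two
  have hC : ∀ x ∈ Icc (0 : ℝ) 1, ∀ t, ∫ y in Ioc 0 1, cos (t * (x - y)) * μ y = 0 := by
    refine fun x hx => integral_cos_mul_sub_eq_zero_of_dense hdense hint x ?_
    rintro _ ⟨k, rfl⟩
    have := integral_cos_sq_mul_abs_sub hint (2 * ν k) x
    rw [h0 k x hx, ← mul_assoc, show (2 : ℝ) * 2 = 4 by norm_num] at this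
    linarith
  exact ae_eq_zero_of_integral_cos_sin_mul_eq_zero zero_lt_one hμ
    (fun t => by simpa using hC 0 ⟨le_rfl, zero_le_one⟩ t)
    (fun t => integral_sin_mul_eq_zero_of_integral_cos_mul_sub hint (fun x hx => hC x hx t))

/-- Uniqueness with dense frequencies: if `{4ν_k}` is dense in `[0,∞)` and
`μ ∈ L²([0,1])` satisfies `T_{ν_k} μ = 0` for all `k`, then `μ = 0` a.e. on `[0,1]`. -/
theorem uniqueness_with_dense_frequencies (ν : ℕ → ℝ) (hν : ∀ k, 0 < ν k)
    (hdense : ∀ x : ℝ, 0 ≤ x → x ∈ closure (Set.range fun k : ℕ => 4 * ν k))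
    (μ : ℝ → ℝ) (hμ : MemLp μ 2 (volume.restrict (Set.Icc (0:ℝ) 1)))
    (h0 : ∀ k : ℕ, ∀ x ∈ Set.Icc (0:ℝ) 1,
      ∫ y in Set.Icc (0:ℝ) 1, (Real.cos (2 * ν k * |x - y|))^2 * μ y = 0) :
    ∀ᵐ y ∂(volume.restrict (Set.Icc (0:ℝ) 1)), μ y = 0 :=
  uniqueness_with_dense_frequencies_general ν hdense μ hμ h0
end
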